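/- Suppose the kernel functions K_1,…,K_n are singular and J is an n-field function satisfying condition (∞₊). Let q > 0 and y ∈ S̄ with m_0(y) ≠ -∞, and let η > 0 and Z ⊆ I_0(y) satisfy, for every x ∈ S̄ with ‖x - y‖ ≤ η: Z ⊆ I_0(x) with |t - x_i| ≥ η for all t ∈ Z, i = 1,…,n; m_0(x) = sup_{t ∈ Z} F(x,t); and F(y,t) ≥ m_0(y) - q for all t ∈ Z. Then there exists η' ∈ (0, η) such that Z ⊆ [η', 1], so that for each x ∈ S̄ with ‖x - y‖ ≤ η' the set Z lies in the interior of I_0(x) and has distance at least η' from 0 as well as from x_1,…,x_n. The analogous assertion holds for m_n, I_n and the endpoint 1 when J satisfies (∞₋). -/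

import Mathlib

open Set Filter
open scoped BigOperators Topology

noncomputable section

/-- The real part of an extended-real-valued function. -/
def toR (K : ℝ → EReal) : ℝ → ℝ := fun t => (K t).toReal

/-- A *kernel function*: finite-valued, continuous and concave on `[-1,0)` and `(0,1]`,
never `+∞`, and with coinciding one-sided limits at `0` (given by the value `K 0`). -/
structure IsKernel (K : ℝ → EReal) : Prop where
  ne_top : ∀ t, K t ≠ ⊤
  finite_left : ∀ t ∈ Ico (-1:ℝ) 0, K t ≠ ⊥
  finite_right : ∀ t ∈ Ioc (0:ℝ) 1, K t ≠ ⊥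
  cont_left : ContinuousOn (toR K) (Ico (-1:ℝ) 0)
  cont_right : ContinuousOn (toR K) (Ioc (0:ℝ) 1)
  concave_left : ConcaveOn ℝ (Ico (-1:ℝ) 0) (toR K)
  concave_right : ConcaveOn ℝ (Ioc (0:ℝ) 1) (toR K)
  tendsto_left : Tendsto K (nhdsWithin 0 (Iio 0)) (nhds (K 0))
  tendsto_right : Tendsto K (nhdsWithin 0 (Ioi 0)) (nhds (K 0))

/-- Left one-sided derivative. -/
def Dm (f : ℝ → ℝ) (t : ℝ) : ℝ := derivWithin f (Iio t) t

/-- Right one-sided derivative. -/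
def Dp (f : ℝ → ℝ) (t : ℝ) : ℝ := derivWithin f (Ioi t) t

/-- Condition (PM_c): periodized `c`-monotonicity. -/
def PMcond (K : ℝ → EReal) (c : ℝ) : Prop :=
  ∀ t ∈ Ioo (0:ℝ) 1, c ≤ Dm (toR K) t - Dm (toR K) (t - 1)

/-- An *n-field function*: bounded above, never `+∞`, finite at more than `n` points of
`[0,1]`, where the endpoints count with weight `1/2`. -/
structure IsNField (n : ℕ) (J : ℝ → EReal) : Prop where
  ne_top : ∀ t, J t ≠ ⊤
  bdd : ∃ M : ℝ, ∀ t ∈ Icc (0:ℝ) 1, J t ≤ (M : EReal)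
  count : (∃ T : Finset ℝ, ↑T ⊆ {t | t ∈ Ioo (0:ℝ) 1 ∧ J t ≠ ⊥} ∧ n + 1 ≤ T.card) ∨
    ((∃ T : Finset ℝ, ↑T ⊆ {t | t ∈ Ioo (0:ℝ) 1 ∧ J t ≠ ⊥} ∧ n ≤ T.card) ∧
      (J 0 ≠ ⊥ ∨ J 1 ≠ ⊥))

/-- The open simplex `S`. -/
def openSimplex (n : ℕ) : Set (Fin n → ℝ) :=
  {y | StrictMono y ∧ ∀ i, y i ∈ Ioo (0:ℝ) 1}

/-- The closed simplex `S̄`. -/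
def closedSimplex (n : ℕ) : Set (Fin n → ℝ) :=
  {y | Monotone y ∧ ∀ i, y i ∈ Icc (0:ℝ) 1}

/-- The left endpoint `y_j` of `I_j(y)`, with the convention `y_0 = 0`. -/
def nodeLo {n : ℕ} (y : Fin n → ℝ) (j : ℕ) : ℝ :=
  if h : 0 < j ∧ j ≤ n then y ⟨j - 1, by omega⟩ else 0

/-- The right endpoint `y_{j+1}` of `I_j(y)`, with the convention `y_{n+1} = 1`. -/
def nodeHi {n : ℕ} (y : Fin n → ℝ) (j : ℕ) : ℝ :=
  if h : j < n then y ⟨j, h⟩ else 1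

/-- The interval `I_j(y) = [y_j, y_{j+1}]`. -/
def Ij {n : ℕ} (y : Fin n → ℝ) (j : ℕ) : Set ℝ := Icc (nodeLo y j) (nodeHi y j)

/-- The sum of translates function `F(y,t) = J(t) + ∑ K_j(t - y_j)`. -/
def SOT {n : ℕ} (K : Fin n → ℝ → EReal) (J : ℝ → EReal) (y : Fin n → ℝ) (t : ℝ) : EReal :=
  J t + ∑ i, K i (t - y i)

/-- The interval maximum `m_j(y) = sup_{t ∈ I_j(y)} F(y,t)`. -/
def mj {n : ℕ} (K : Fin n → ℝ → EReal) (J : ℝ → EReal) (y : Fin n → ℝ) (j : ℕ) : EReal :=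
  ⨆ t ∈ Ij y j, SOT K J y t

/-- The regularity set `Y`. -/
def regSet {n : ℕ} (K : Fin n → ℝ → EReal) (J : ℝ → EReal) : Set (Fin n → ℝ) :=
  {y ∈ openSimplex n | ∀ j ≤ n, mj K J y j ≠ ⊥}

/-- The difference function `Φ(y) = (m_1 - m_0, …, m_n - m_{n-1})`. -/
def PhiFun {n : ℕ} (K : Fin n → ℝ → EReal) (J : ℝ → EReal) (y : Fin n → ℝ) : Fin n → ℝ :=
  fun i => (mj K J y ((i : ℕ) + 1)).toReal - (mj K J y (i : ℕ)).toReal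

/-- A map between (pseudo)metric spaces is *locally bi-Lipschitz* if every point has a
neighborhood on which the map is a bi-Lipschitz homeomorphism onto its image. -/
def LocallyBiLipschitz {α β : Type*} [PseudoMetricSpace α] [PseudoMetricSpace β]
    (f : α → β) : Prop :=
  ∀ x : α, ∃ U ∈ 𝓝 x, ∃ c C : ℝ, 0 < c ∧ ∀ a ∈ U, ∀ b ∈ U,
    c * dist a b ≤ dist (f a) (f b) ∧ dist (f a) (f b) ≤ C * dist a b

/-- The relative interior of `[a,b] ⊆ [0,1]` in the space `[0,1]`. -/
def relIntIcc (a b : ℝ) : Set ℝ :=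
  (if a = 0 then Ici a else Ioi a) ∩ (if b = 1 then Iic b else Iio b)

/-- Condition `(∞₊)`. -/
def CondInfPlus (J : ℝ → EReal) : Prop :=
  J 0 = ⊥ ∧ Tendsto J (nhdsWithin 0 (Ioi 0)) (nhds ⊥)

/-- Condition `(∞₋)`. -/
def CondInfMinus (J : ℝ → EReal) : Prop :=
  J 1 = ⊥ ∧ Tendsto J (nhdsWithin 1 (Iio 1)) (nhds ⊥)

/-- Fenton's cusp condition `(∞'₊)`. -/
def CuspPlus (J : ℝ → EReal) : Prop :=
  ∀ M : ℝ, ∃ δ > (0:ℝ), ∀ s t : ℝ, 0 ≤ s → s < t → t ≤ δ →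
    J s ≠ ⊥ → J t ≠ ⊥ → M ≤ ((J t).toReal - (J s).toReal) / (t - s)

/-- Fenton's cusp condition `(∞'₋)`. -/
def CuspMinus (J : ℝ → EReal) : Prop :=
  ∀ M : ℝ, ∃ δ > (0:ℝ), ∀ t s : ℝ, 1 - δ ≤ t → t < s → s ≤ 1 →
    J s ≠ ⊥ → J t ≠ ⊥ → ((J t).toReal - (J s).toReal) / (t - s) ≤ -M

/-- `L : [0,1] → [0,∞)` is log-concave:
`L(λs + (1-λ)t) ≥ L(s)^λ L(t)^{1-λ}`. -/
def LogConcaveOn01 (L : ℝ → ℝ) : Prop :=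
  ∀ s ∈ Icc (0:ℝ) 1, ∀ t ∈ Icc (0:ℝ) 1, ∀ l ∈ Icc (0:ℝ) 1,
    L s ^ l * L t ^ (1 - l) ≤ L (l * s + (1 - l) * t)


/-!
On `Z` the sum of translates stays above the finite value `m_j(y) - q`, while the kernels
`K_i(t - y_i)` are bounded above because `Z` keeps the distance `η` from the nodes `y_i`.
Hence `J` is bounded below on `Z`. Since `J` equals `-∞` at the endpoint and tends to `-∞`
there, `Z` keeps a positive distance `ε` from that endpoint, and `η' = min ε (η/2)` works.
-/

theorem EReal.coe_finset_sum {ι : Type*} (s : Finset ι) (f : ι → ℝ) :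
    ((∑ i ∈ s, f i : ℝ) : EReal) = ∑ i ∈ s, (f i : EReal) :=
  map_sum (⟨⟨(↑), EReal.coe_zero⟩, EReal.coe_add⟩ : ℝ →+ EReal) f s

theorem ContinuousWithinAt.exists_pos_le_dist_of_forall_le {α β : Type*} [PseudoMetricSpace α]
    [LinearOrder β] [TopologicalSpace β] [OrderTopology β] {f : α → β} {s Z : Set α} {e : α}
    {b : β} (hf : ContinuousWithinAt f s e) (he : f e < b) (hZs : Z ⊆ s)
    (hZ : ∀ t ∈ Z, b ≤ f t) : ∃ ε > 0, ∀ t ∈ Z, ε ≤ dist t e := by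
  obtain ⟨ε, hε, hball⟩ := Metric.mem_nhdsWithin_iff.1 (hf.eventually_lt_const he)
  exact ⟨ε, hε, fun t ht => le_of_not_gt fun hlt => (hZ t ht).not_gt (hball ⟨hlt, hZs ht⟩)⟩

theorem CondInfPlus.continuousWithinAt_Ici {J : ℝ → EReal} (hJ : CondInfPlus J) :
    ContinuousWithinAt J (Ici 0) 0 :=
  continuousWithinAt_Ioi_iff_Ici.1 <| by rw [ContinuousWithinAt, hJ.1]; exact hJ.2

theorem CondInfMinus.continuousWithinAt_Iic {J : ℝ → EReal} (hJ : CondInfMinus J) :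
    ContinuousWithinAt J (Iic 1) 1 :=
  continuousWithinAt_Iio_iff_Iic.1 <| by rw [ContinuousWithinAt, hJ.1]; exact hJ.2

theorem IsKernel.exists_le_of_le_abs {K : ℝ → EReal} (hK : IsKernel K) {η : ℝ} (hη : 0 < η) :
    ∃ C : ℝ, ∀ s ∈ Icc (-1 : ℝ) 1, η ≤ |s| → K s ≤ C := by
  obtain ⟨C₁, hC₁⟩ := isCompact_Icc.bddAbove_image
    (hK.cont_left.mono (Icc_subset_Ico_right (neg_lt_zero.2 hη)))
  obtain ⟨C₂, hC₂⟩ := isCompact_Icc.bddAbove_image (hK.cont_right.mono (Icc_subset_Ioc_left hη))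
  refine ⟨max C₁ C₂, fun s hs hηs => ?_⟩
  have hle : toR K s ≤ max C₁ C₂ := by
    rcases le_total s 0 with h | h
    · rw [abs_of_nonpos h] at hηs
      exact (hC₁ ⟨s, ⟨hs.1, by linarith⟩, rfl⟩).trans (le_max_left _ _)
    · rw [abs_of_nonneg h] at hηs
      exact (hC₂ ⟨s, ⟨hηs, hs.2⟩, rfl⟩).trans (le_max_right _ _)
  exact (EReal.le_coe_toReal (hK.ne_top s)).trans (EReal.coe_le_coe_iff.2 hle)

section SumOfTranslates

variable {n : ℕ} {K : Fin n → ℝ → EReal} {J : ℝ → EReal} {y : Fin n → ℝ}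

theorem zero_le_nodeLo (hy : ∀ i, 0 ≤ y i) (j : ℕ) : 0 ≤ nodeLo y j := by
  unfold nodeLo
  split_ifs
  exacts [hy _, le_rfl]

theorem nodeHi_le_one (hy : ∀ i, y i ≤ 1) (j : ℕ) : nodeHi y j ≤ 1 := by
  unfold nodeHi
  split_ifs
  exacts [hy _, le_rfl]

theorem Ij_subset_Icc (hy : y ∈ closedSimplex n) (j : ℕ) : Ij y j ⊆ Icc 0 1 :=
  Icc_subset_Icc (zero_le_nodeLo (fun i => (hy.2 i).1) j) (nodeHi_le_one (fun i => (hy.2 i).2) j)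

theorem exists_coe_le_of_sub_le_SOT (hK : ∀ i, IsKernel (K i)) (hy : y ∈ closedSimplex n)
    {Z : Set ℝ} (hZ : Z ⊆ Icc 0 1) {η : ℝ} (hη : 0 < η) (hsep : ∀ t ∈ Z, ∀ i, η ≤ |t - y i|)
    {m : EReal} (hm : m ≠ ⊥) {q : ℝ} (hq : ∀ t ∈ Z, m - q ≤ SOT K J y t) :
    ∃ B : ℝ, ∀ t ∈ Z, (B : EReal) ≤ J t := by
  choose C hC using fun i => (hK i).exists_le_of_le_abs hη
  obtain ⟨a, -, ham⟩ := EReal.lt_iff_exists_real_btwn.1 (bot_lt_iff_ne_bot.2 hm)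
  refine ⟨a - q - ∑ i, C i, fun t ht => ?_⟩
  have hKC : ∑ i, K i (t - y i) ≤ ((∑ i, C i : ℝ) : EReal) := by
    rw [EReal.coe_finset_sum]
    refine Finset.sum_le_sum fun i _ => hC i _ ⟨?_, ?_⟩ (hsep t ht i) <;>
      linarith [(hZ ht).1, (hZ ht).2, (hy.2 i).1, (hy.2 i).2]
  have haq : ((a - q : ℝ) : EReal) ≤ J t + ((∑ i, C i : ℝ) : EReal) :=
    calc ((a - q : ℝ) : EReal) ≤ m - q :=
        (EReal.coe_sub a q).trans_le (EReal.sub_le_sub ham.le le_rfl)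
      _ ≤ SOT K J y t := hq t ht
      _ ≤ J t + ((∑ i, C i : ℝ) : EReal) := add_le_add_right hKC _
  exact EReal.sub_le_of_le_add haq

theorem exists_separation_of_endpoint_eq_bot (hK : ∀ i, IsKernel (K i))
    (hy : y ∈ closedSimplex n) {j : ℕ} (hm : mj K J y j ≠ ⊥) {s : Set ℝ} {e : ℝ}
    (he : J e = ⊥) (hJ : ContinuousWithinAt J s e) {Z : Set ℝ} (hZs : Z ⊆ s)
    (hZ : Z ⊆ Ij y j) {η : ℝ} (hη : 0 < η)
    (hnear : ∀ x ∈ closedSimplex n, dist x y ≤ η → Z ⊆ Ij x j ∧ ∀ t ∈ Z, ∀ i, η ≤ |t - x i|)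
    {q : ℝ} (hq : ∀ t ∈ Z, mj K J y j - q ≤ SOT K J y t) :
    ∃ η', 0 < η' ∧ η' < η ∧ (∀ t ∈ Z, η' ≤ |t - e|) ∧
      ∀ x ∈ closedSimplex n, dist x y ≤ η' →
        Z ⊆ Ij x j ∧ ∀ t ∈ Z, η' ≤ |t - e| ∧ ∀ i, η' ≤ |t - x i| := by
  obtain ⟨B, hB⟩ := exists_coe_le_of_sub_le_SOT hK hy (hZ.trans (Ij_subset_Icc hy j)) hη
    (hnear y hy (by simpa using hη.le)).2 hm hq
  obtain ⟨ε, hε, hεZ⟩ := hJ.exists_pos_le_dist_of_forall_le (he ▸ EReal.bot_lt_coe B) hZs hB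
  have hε' : ∀ t ∈ Z, min ε (η / 2) ≤ |t - e| := fun t ht =>
    (min_le_left _ _).trans ((hεZ t ht).trans_eq (Real.dist_eq t e))
  have hη' : min ε (η / 2) ≤ η := (min_le_right _ _).trans (half_le_self hη.le)
  refine ⟨min ε (η / 2), by positivity, (min_le_right _ _).trans_lt (half_lt_self hη), hε',
    fun x hx hxy => ?_⟩
  obtain ⟨hZx, hsep⟩ := hnear x hx (hxy.trans hη')
  exact ⟨hZx, fun t ht => ⟨hε' t ht, fun i => hη'.trans (hsep t ht i)⟩⟩

end SumOfTranslates

theorem Zq_separation_from_endpoints_general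
    {n : ℕ} (K : Fin n → ℝ → EReal) (J : ℝ → EReal)
    (hK : ∀ i, IsKernel (K i)) :
    (CondInfPlus J →
      ∀ q : ℝ, 0 < q → ∀ y ∈ closedSimplex n, mj K J y 0 ≠ ⊥ →
      ∀ η : ℝ, 0 < η → ∀ Z : Set ℝ, Z ⊆ Ij y 0 →
      (∀ x ∈ closedSimplex n, dist x y ≤ η →
        (Z ⊆ Ij x 0 ∧ ∀ t ∈ Z, ∀ i, η ≤ |t - x i|) ∧
        mj K J x 0 = (⨆ t ∈ Z, SOT K J x t)) →
      (∀ t ∈ Z, mj K J y 0 - (q : EReal) ≤ SOT K J y t) →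
      ∃ η' : ℝ, 0 < η' ∧ η' < η ∧ (∀ t ∈ Z, η' ≤ t) ∧
        ∀ x ∈ closedSimplex n, dist x y ≤ η' →
          Z ⊆ Ij x 0 ∧ ∀ t ∈ Z, η' ≤ |t - 0| ∧ ∀ i, η' ≤ |t - x i|) ∧
    (CondInfMinus J →
      ∀ q : ℝ, 0 < q → ∀ y ∈ closedSimplex n, mj K J y n ≠ ⊥ →
      ∀ η : ℝ, 0 < η → ∀ Z : Set ℝ, Z ⊆ Ij y n →
      (∀ x ∈ closedSimplex n, dist x y ≤ η →
        (Z ⊆ Ij x n ∧ ∀ t ∈ Z, ∀ i, η ≤ |t - x i|) ∧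
        mj K J x n = (⨆ t ∈ Z, SOT K J x t)) →
      (∀ t ∈ Z, mj K J y n - (q : EReal) ≤ SOT K J y t) →
      ∃ η' : ℝ, 0 < η' ∧ η' < η ∧ (∀ t ∈ Z, t ≤ 1 - η') ∧
        ∀ x ∈ closedSimplex n, dist x y ≤ η' →
          Z ⊆ Ij x n ∧ ∀ t ∈ Z, η' ≤ |t - 1| ∧ ∀ i, η' ≤ |t - x i|) := by
  constructor
  · intro hJ q _ y hy hm η hη Z hZ hnear hq
    have hZ01 := hZ.trans (Ij_subset_Icc hy 0)
    obtain ⟨η', hη', hη'η, hZe, hx⟩ := exists_separation_of_endpoint_eq_bot hK hy hm hJ.1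
      hJ.continuousWithinAt_Ici (fun t ht => (hZ01 ht).1) hZ hη
      (fun x hx hxy => (hnear x hx hxy).1) hq
    exact ⟨η', hη', hη'η, fun t ht => by simpa [abs_of_nonneg (hZ01 ht).1] using hZe t ht, hx⟩
  · intro hJ q _ y hy hm η hη Z hZ hnear hq
    have hZ01 := hZ.trans (Ij_subset_Icc hy n)
    obtain ⟨η', hη', hη'η, hZe, hx⟩ := exists_separation_of_endpoint_eq_bot hK hy hm hJ.1
      hJ.continuousWithinAt_Iic (fun t ht => (hZ01 ht).2) hZ hη
      (fun x hx hxy => (hnear x hx hxy).1) hq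
    exact ⟨η', hη', hη'η, fun t ht => by
      linarith [hZe t ht, abs_of_nonpos (sub_nonpos.2 (hZ01 ht).2)], hx⟩

/-- (Lemma 7.3 / `lem:ZqwithJcond2`.) For singular kernels: if `J`
satisfies `(∞₊)`, then any set `Z` as in the Z-q lemma for `j = 0` can be separated from
`0`: there is `η' ∈ (0,η)` with `Z ⊆ [η', 1]`, so that for `x ∈ S̄` with `‖x - y‖ ≤ η'`
the set `Z` lies in the interior of `I_0(x)`, with distance at least `η'` from `0` and
from `x_1,…,x_n`. The analogous assertion holds for `m_n`, `I_n` and the endpoint `1`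
when `J` satisfies `(∞₋)`. -/
theorem Zq_separation_from_endpoints
    {n : ℕ} (hn : 1 ≤ n) (K : Fin n → ℝ → EReal) (J : ℝ → EReal)
    (hK : ∀ i, IsKernel (K i)) (hsing : ∀ i, K i 0 = ⊥) (hJ : IsNField n J) :
    (CondInfPlus J →
      ∀ q : ℝ, 0 < q → ∀ y ∈ closedSimplex n, mj K J y 0 ≠ ⊥ →
      ∀ η : ℝ, 0 < η → ∀ Z : Set ℝ, Z ⊆ Ij y 0 →
      (∀ x ∈ closedSimplex n, dist x y ≤ η →
        (Z ⊆ Ij x 0 ∧ ∀ t ∈ Z, ∀ i, η ≤ |t - x i|) ∧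
        mj K J x 0 = (⨆ t ∈ Z, SOT K J x t)) →
      (∀ t ∈ Z, mj K J y 0 - (q : EReal) ≤ SOT K J y t) →
      ∃ η' : ℝ, 0 < η' ∧ η' < η ∧ (∀ t ∈ Z, η' ≤ t) ∧
        ∀ x ∈ closedSimplex n, dist x y ≤ η' →
          Z ⊆ Ij x 0 ∧ ∀ t ∈ Z, η' ≤ |t - 0| ∧ ∀ i, η' ≤ |t - x i|) ∧
    (CondInfMinus J →
      ∀ q : ℝ, 0 < q → ∀ y ∈ closedSimplex n, mj K J y n ≠ ⊥ →
      ∀ η : ℝ, 0 < η → ∀ Z : Set ℝ, Z ⊆ Ij y n →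
      (∀ x ∈ closedSimplex n, dist x y ≤ η →
        (Z ⊆ Ij x n ∧ ∀ t ∈ Z, ∀ i, η ≤ |t - x i|) ∧
        mj K J x n = (⨆ t ∈ Z, SOT K J x t)) →
      (∀ t ∈ Z, mj K J y n - (q : EReal) ≤ SOT K J y t) →
      ∃ η' : ℝ, 0 < η' ∧ η' < η ∧ (∀ t ∈ Z, t ≤ 1 - η') ∧
        ∀ x ∈ closedSimplex n, dist x y ≤ η' →
          Z ⊆ Ij x n ∧ ∀ t ∈ Z, η' ≤ |t - 1| ∧ ∀ i, η' ≤ |t - x i|) :=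
  Zq_separation_from_endpoints_general K J hK

end
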